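/- arXiv:1405.7741 — 4 statements merged into one kernel-verified Lean document; each statement's English description precedes it below -/
import Mathlib

section
/- If T₁ is α₁-averaged and T₂ is α₂-averaged with α₁, α₂ ∈ (0,1), then the composition T₁∘T₂ is α-averaged with α = (α₁ + α₂ − 2α₁α₂)/(1 − α₁α₂). -/
set_option maxHeartbeats 1000000

section Aux
variable {E : Type*} [NormedAddCommGroup E] [InnerProductSpace ℝ E]

lemma key_id (α : ℝ) (u m : E) :
    ‖(1-α)•u + α•m‖^2 = (1-α)*‖u‖^2 + α*‖m‖^2 - α*(1-α)*‖u-m‖^2 := by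
  have h : ∀ v : E, ‖v‖^2 = (inner ℝ v v : ℝ) := fun v => (real_inner_self_eq_norm_sq v).symm
  simp only [h, inner_add_left, inner_add_right, inner_sub_left, inner_sub_right,
    real_inner_smul_left, real_inner_smul_right]
  rw [real_inner_comm m u]
  ring

lemma avg_sq (α : ℝ) (hα0 : 0 < α) {N T : E → E}
    (hN : ∀ x y, ‖N x - N y‖ ≤ ‖x - y‖) (hT : ∀ x, T x = (1-α)•x + α•N x) (x y : E) :
    α * ‖T x - T y‖^2 ≤ α * ‖x-y‖^2 - (1-α) * ‖(x-y)-(T x - T y)‖^2 := by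
  have hw : T x - T y = (1-α)•(x-y) + α•(N x - N y) := by rw [hT x, hT y]; module
  have hkey := key_id α (x-y) (N x - N y)
  have huw : (x-y) - (T x - T y) = α • ((x-y) - (N x - N y)) := by rw [hw]; module
  have h2 : ‖(x-y)-(T x - T y)‖^2 = α^2 * ‖(x-y)-(N x - N y)‖^2 := by
    rw [huw, norm_smul, Real.norm_eq_abs, abs_of_pos hα0, mul_pow]
  have hn2 : ‖N x - N y‖^2 ≤ ‖x - y‖^2 := pow_le_pow_left₀ (norm_nonneg _) (hN x y) 2
  rw [h2, hw, hkey]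
  nlinarith [mul_le_mul_of_nonneg_left hn2 (sq_nonneg α)]

lemma arith (α₁ α₂ α A B C P Q R M mm : ℝ)
    (h01 : 0 < α₁) (h11 : α₁ < 1) (h02 : 0 < α₂) (h12 : α₂ < 1) (hα0 : 0 < α)
    (hrel : α * (1 - α₁*α₂) = α₁ + α₂ - 2*α₁*α₂)
    (hP : 0 ≤ P) (hQ : 0 ≤ Q)
    (i2 : α₂*B ≤ α₂*A - (1-α₂)*P^2)
    (i1 : α₁*C ≤ α₁*B - (1-α₁)*Q^2)
    (htri2 : R^2 ≤ (P+Q)^2)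
    (hkey : C = (1-α)*A + α*mm - α*(1-α)*M)
    (hR2 : R^2 = α^2*M) :
    mm ≤ A := by
  have honeα : (1-α)*(1-α₁*α₂) = (1-α₁)*(1-α₂) := by linear_combination -hrel
  have hD0 : (0:ℝ) < 1 - α₁*α₂ := by nlinarith
  have hpos : (0:ℝ) < α₁*α₂ := mul_pos h01 h02
  have c2 := mul_le_mul_of_nonneg_left i2 h01.le
  have c1 := mul_le_mul_of_nonneg_left i1 h02.le
  have hchain : α₁*α₂*C ≤ α₁*α₂*A - (α₁*(1-α₂))*P^2 - (α₂*(1-α₁))*Q^2 := by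
    nlinarith [c1, c2]
  have ha0 : (0:ℝ) < α₁*(1-α₂) := mul_pos h01 (by linarith)
  have hb0 : (0:ℝ) < α₂*(1-α₁) := mul_pos h02 (by linarith)
  have h5 : (1-α₁)*(1-α₂)*R^2 ≤ (α₁+α₂-2*α₁*α₂)*(A-C) := by
    refine le_of_mul_le_mul_left ?_ hpos
    calc α₁*α₂*((1-α₁)*(1-α₂)*R^2)
        = (α₁*(1-α₂))*((α₂*(1-α₁))*R^2) := by ring
      _ ≤ ((α₁*(1-α₂))+(α₂*(1-α₁)))*((α₁*(1-α₂))*P^2+(α₂*(1-α₁))*Q^2) := by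
          have h1 : (α₁*(1-α₂))*((α₂*(1-α₁))*R^2) ≤ (α₁*(1-α₂))*((α₂*(1-α₁))*(P+Q)^2) :=
            mul_le_mul_of_nonneg_left
              (mul_le_mul_of_nonneg_left htri2 hb0.le) ha0.le
          nlinarith [sq_nonneg ((α₁*(1-α₂))*P - (α₂*(1-α₁))*Q)]
      _ ≤ ((α₁*(1-α₂))+(α₂*(1-α₁)))*(α₁*α₂*(A-C)) := by
          refine mul_le_mul_of_nonneg_left ?_ (by positivity)
          linarith [hchain]
      _ = α₁*α₂*((α₁+α₂-2*α₁*α₂)*(A-C)) := by ring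
  have hαA : (1-α)*R^2 ≤ α*(A-C) := by
    refine le_of_mul_le_mul_right ?_ hD0
    calc (1-α)*R^2*(1-α₁*α₂) = (1-α₁)*(1-α₂)*R^2 := by linear_combination R^2 * honeα
      _ ≤ (α₁+α₂-2*α₁*α₂)*(A-C) := h5
      _ = α*(A-C)*(1-α₁*α₂) := by linear_combination (C-A) * hrel
  rw [hR2] at hαA
  have e1 : α^2*mm = α*C - α*(1-α)*A + (1-α)*(α^2*M) := by linear_combination (-α)*hkey
  have e3 : α^2*mm ≤ α^2*A := by nlinarith [e1, hαA]
  exact le_of_mul_le_mul_left e3 (by positivity)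

lemma repr_eq {F : Type*} [AddCommGroup F] [Module ℝ F] (α : ℝ) (hα0 : α ≠ 0) (z x : F) :
    z = (1 - α) • x + α • ((1 - 1/α) • x + (1/α) • z) := by
  rw [smul_add, smul_smul, smul_smul, mul_one_sub, mul_one_div, div_self hα0]
  module

lemma comp_nonexp (α₁ α₂ α : ℝ) (h01 : 0 < α₁) (h11 : α₁ < 1) (h02 : 0 < α₂) (h12 : α₂ < 1)
    (hα0 : 0 < α) (hrel : α * (1 - α₁*α₂) = α₁ + α₂ - 2*α₁*α₂)
    {N₁ N₂ T₁ T₂ : E → E}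
    (hN₁ : ∀ x y, ‖N₁ x - N₁ y‖ ≤ ‖x - y‖) (hT₁ : ∀ x, T₁ x = (1-α₁)•x + α₁•N₁ x)
    (hN₂ : ∀ x y, ‖N₂ x - N₂ y‖ ≤ ‖x - y‖) (hT₂ : ∀ x, T₂ x = (1-α₂)•x + α₂•N₂ x)
    (x y : E) :
    ‖((1 - 1/α) • x + (1/α) • (T₁ (T₂ x))) - ((1 - 1/α) • y + (1/α) • (T₁ (T₂ y)))‖ ≤ ‖x - y‖ := by
  have hgoal : ((1 - 1/α) • x + (1/α) • (T₁ (T₂ x))) - ((1 - 1/α) • y + (1/α) • (T₁ (T₂ y)))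
      = (1 - 1/α)•(x-y) + (1/α)•(T₁ (T₂ x) - T₁ (T₂ y)) := by module
  rw [hgoal]
  have hwm : T₁ (T₂ x) - T₁ (T₂ y)
      = (1-α)•(x-y) + α•((1 - 1/α)•(x-y) + (1/α)•(T₁ (T₂ x) - T₁ (T₂ y))) :=
    repr_eq α hα0.ne' _ _
  have hkey := key_id α (x-y) ((1 - 1/α)•(x-y) + (1/α)•(T₁ (T₂ x) - T₁ (T₂ y)))
  rw [← hwm] at hkey
  have hum : (x-y) - (T₁ (T₂ x) - T₁ (T₂ y))
      = α • ((x-y) - ((1 - 1/α)•(x-y) + (1/α)•(T₁ (T₂ x) - T₁ (T₂ y)))) := by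
    conv_lhs => rw [hwm]
    module
  have hR2 : ‖(x-y) - (T₁ (T₂ x) - T₁ (T₂ y))‖^2
      = α^2 * ‖(x-y) - ((1 - 1/α)•(x-y) + (1/α)•(T₁ (T₂ x) - T₁ (T₂ y)))‖^2 := by
    rw [hum, norm_smul, Real.norm_eq_abs, abs_of_pos hα0, mul_pow]
  have i2 := avg_sq α₂ h02 hN₂ hT₂ x y
  have i1 := avg_sq α₁ h01 hN₁ hT₁ (T₂ x) (T₂ y)
  have htri : ‖(x-y) - (T₁ (T₂ x) - T₁ (T₂ y))‖
      ≤ ‖(x-y) - (T₂ x - T₂ y)‖ + ‖(T₂ x - T₂ y) - (T₁ (T₂ x) - T₁ (T₂ y))‖ := by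
    have h : (x-y) - (T₁ (T₂ x) - T₁ (T₂ y))
        = ((x-y) - (T₂ x - T₂ y)) + ((T₂ x - T₂ y) - (T₁ (T₂ x) - T₁ (T₂ y))) := by module
    rw [h]; exact norm_add_le _ _
  have htri2 : ‖(x-y) - (T₁ (T₂ x) - T₁ (T₂ y))‖^2
      ≤ (‖(x-y) - (T₂ x - T₂ y)‖ + ‖(T₂ x - T₂ y) - (T₁ (T₂ x) - T₁ (T₂ y))‖)^2 := by
    nlinarith [norm_nonneg ((x-y) - (T₁ (T₂ x) - T₁ (T₂ y)))]
  have hm2 := arith α₁ α₂ α (‖x-y‖^2) (‖T₂ x - T₂ y‖^2) (‖T₁ (T₂ x) - T₁ (T₂ y)‖^2)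
    (‖(x-y) - (T₂ x - T₂ y)‖) (‖(T₂ x - T₂ y) - (T₁ (T₂ x) - T₁ (T₂ y))‖)
    (‖(x-y) - (T₁ (T₂ x) - T₁ (T₂ y))‖)
    (‖(x-y) - ((1 - 1/α)•(x-y) + (1/α)•(T₁ (T₂ x) - T₁ (T₂ y)))‖^2)
    (‖(1 - 1/α)•(x-y) + (1/α)•(T₁ (T₂ x) - T₁ (T₂ y))‖^2)
    h01 h11 h02 h12 hα0 hrel (norm_nonneg _) (norm_nonneg _) i2 i1 htri2 hkey hR2
  nlinarith [norm_nonneg ((1 - 1/α)•(x-y) + (1/α)•(T₁ (T₂ x) - T₁ (T₂ y))),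
    norm_nonneg (x-y), hm2]

end Aux

theorem stmt_9 (n : ℕ) (T₁ T₂ : EuclideanSpace ℝ (Fin n) → EuclideanSpace ℝ (Fin n))
    (α₁ α₂ : ℝ) (hα₁ : α₁ ∈ Set.Ioo (0 : ℝ) 1) (hα₂ : α₂ ∈ Set.Ioo (0 : ℝ) 1)
    (h₁ : ∃ N : EuclideanSpace ℝ (Fin n) → EuclideanSpace ℝ (Fin n),
      (∀ x y, ‖N x - N y‖ ≤ ‖x - y‖) ∧ ∀ x, T₁ x = (1 - α₁) • x + α₁ • N x)
    (h₂ : ∃ N : EuclideanSpace ℝ (Fin n) → EuclideanSpace ℝ (Fin n),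
      (∀ x y, ‖N x - N y‖ ≤ ‖x - y‖) ∧ ∀ x, T₂ x = (1 - α₂) • x + α₂ • N x) :
    ∃ N : EuclideanSpace ℝ (Fin n) → EuclideanSpace ℝ (Fin n),
      (∀ x y, ‖N x - N y‖ ≤ ‖x - y‖) ∧
      ∀ x, T₁ (T₂ x) =
        (1 - (α₁ + α₂ - 2 * α₁ * α₂) / (1 - α₁ * α₂)) • x +
          ((α₁ + α₂ - 2 * α₁ * α₂) / (1 - α₁ * α₂)) • N x := by
  obtain ⟨hα₁0, hα₁1⟩ := hα₁
  obtain ⟨hα₂0, hα₂1⟩ := hα₂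
  obtain ⟨N₁, hN₁, hT₁⟩ := h₁
  obtain ⟨N₂, hN₂, hT₂⟩ := h₂
  have hD0 : (0:ℝ) < 1 - α₁ * α₂ := by nlinarith
  have hβ0 : (0:ℝ) < α₁ + α₂ - 2 * α₁ * α₂ := by nlinarith
  have hα0 : 0 < (α₁ + α₂ - 2 * α₁ * α₂) / (1 - α₁ * α₂) := div_pos hβ0 hD0
  have hrel : ((α₁ + α₂ - 2 * α₁ * α₂) / (1 - α₁ * α₂)) * (1 - α₁ * α₂)
      = α₁ + α₂ - 2 * α₁ * α₂ := div_mul_cancel₀ _ hD0.ne'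
  refine ⟨fun z => (1 - 1/((α₁ + α₂ - 2 * α₁ * α₂) / (1 - α₁ * α₂))) • z
      + (1/((α₁ + α₂ - 2 * α₁ * α₂) / (1 - α₁ * α₂))) • (T₁ (T₂ z)),
    fun x y => ?_, fun x => repr_eq _ hα0.ne' _ _⟩
  exact comp_nonexp α₁ α₂ _ hα₁0 hα₁1 hα₂0 hα₂1 hα0 hrel hN₁ hT₁ hN₂ hT₂ x y
end

section
/- If f : ℝ^n → ℝ is convex and differentiable with L-Lipschitz gradient, then (1/L)∇f is firmly nonexpansive, i.e., ⟨∇f(x) − ∇f(y), x − y⟩ ≥ (1/L)‖∇f(x) − ∇f(y)‖² for all x, y (Baillon–Haddad). -/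
open scoped RealInnerProductSpace

variable {E : Type*} [NormedAddCommGroup E] [InnerProductSpace ℝ E] [CompleteSpace E]

-- derivative along a line
lemma line_hasDerivAt {f : E → ℝ} {g : E → E} (hg : ∀ x, HasGradientAt f (g x) x)
    (x v : E) (t : ℝ) :
    HasDerivAt (fun s : ℝ => f (x + s • v)) ⟪g (x + t • v), v⟫ t := by
  have hc : HasDerivAt (fun s : ℝ => x + s • v) v t := by
    simpa using ((hasDerivAt_id t).smul_const v).const_add x
  have hF : HasFDerivAt f (InnerProductSpace.toDual ℝ E (g (x + t • v))) (x + t • v) :=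
    (hg (x + t • v))
  have := hF.comp_hasDerivAt t hc
  simp only [InnerProductSpace.toDual_apply_apply] at this
  exact this

lemma descent {f : E → ℝ} {g : E → E} (hg : ∀ x, HasGradientAt f (g x) x)
    {L : ℝ} (hL : 0 < L) (hLip : ∀ x y, ‖g x - g y‖ ≤ L * ‖x - y‖) (x y : E) :
    f y ≤ f x + ⟪g x, y - x⟫ + L / 2 * ‖y - x‖ ^ 2 := by
  set v := y - x with hv
  have hgc : Continuous g := by
    have : LipschitzWith (Real.toNNReal L) g := by
      apply LipschitzWith.of_dist_le_mul
      intro a b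
      simpa [dist_eq_norm, Real.coe_toNNReal _ hL.le] using hLip a b
    exact this.continuous
  have hcont : Continuous fun t : ℝ => ⟪g (x + t • v), v⟫ := by
    apply Continuous.inner
    · exact hgc.comp (continuous_const.add (continuous_id.smul continuous_const))
    · exact continuous_const
  have hint : f y - f x = ∫ t in (0:ℝ)..1, ⟪g (x + t • v), v⟫ := by
    have := intervalIntegral.integral_eq_sub_of_hasDerivAt
      (f := fun s : ℝ => f (x + s • v)) (f' := fun t => ⟪g (x + t • v), v⟫)
      (a := 0) (b := 1)
      (fun t _ => line_hasDerivAt hg x v t) (hcont.intervalIntegrable 0 1)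
    rw [this]
    norm_num [hv]
  have hbound : (∫ t in (0:ℝ)..1, ⟪g (x + t • v), v⟫)
      ≤ ⟪g x, v⟫ + L / 2 * ‖v‖ ^ 2 := by
    have h1 : (∫ t in (0:ℝ)..1, ⟪g (x + t • v), v⟫)
        ≤ ∫ t in (0:ℝ)..1, (⟪g x, v⟫ + (L * ‖v‖ ^ 2) * t) := by
      apply intervalIntegral.integral_mono_on zero_le_one
        (hcont.intervalIntegrable 0 1)
        ((Continuous.intervalIntegrable (by fun_prop : Continuous fun t : ℝ => ⟪g x, v⟫ + (L * ‖v‖ ^ 2) * t)) 0 1)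
      intro t ht
      have key : ⟪g (x + t • v) - g x, v⟫ ≤ (L * ‖v‖ ^ 2) * t := by
        calc ⟪g (x + t • v) - g x, v⟫ ≤ ‖g (x + t • v) - g x‖ * ‖v‖ :=
              real_inner_le_norm _ _
          _ ≤ (L * ‖x + t • v - x‖) * ‖v‖ := by
              have := hLip (x + t • v) x
              nlinarith [norm_nonneg v]
          _ = (L * ‖v‖ ^ 2) * t := by
              have : ‖x + t • v - x‖ = t * ‖v‖ := by
                simp [norm_smul, abs_of_nonneg ht.1]
              rw [this]; ring
      have := key
      rw [inner_sub_left] at this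
      linarith
    have h2 : (∫ t in (0:ℝ)..1, (⟪g x, v⟫ + (L * ‖v‖ ^ 2) * t))
        = ⟪g x, v⟫ + L / 2 * ‖v‖ ^ 2 := by
      rw [intervalIntegral.integral_add (intervalIntegrable_const)
        ((Continuous.intervalIntegrable (by fun_prop : Continuous fun t : ℝ => (L * ‖v‖ ^ 2) * t)) 0 1),
        intervalIntegral.integral_const_mul]
      simp [integral_id]
      ring
    linarith [h1, h2.le, h2.ge]
  linarith [hint, hbound]

lemma subgrad {f : E → ℝ} {g : E → E} (hf : ConvexOn ℝ Set.univ f)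
    (hg : ∀ x, HasGradientAt f (g x) x) (x z : E) :
    f x + ⟪g x, z - x⟫ ≤ f z := by
  set h : ℝ → ℝ := fun t => f (x + t • (z - x)) with hh
  have hconv : ConvexOn ℝ Set.univ h := by
    have := hf.comp_affineMap (AffineMap.lineMap x z : ℝ →ᵃ[ℝ] E)
    have he : (f ∘ (AffineMap.lineMap x z : ℝ →ᵃ[ℝ] E)) = h := by
      funext t
      simp [hh, AffineMap.lineMap_apply, add_comm, vsub_eq_sub, vadd_eq_add]
    rw [he] at this
    simpa using this
  have hd : HasDerivAt h ⟪g x, z - x⟫ 0 := by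
    have := line_hasDerivAt hg x (z - x) 0
    simpa using this
  have hs := hconv.le_slope_of_hasDerivWithinAt (Set.mem_univ (0:ℝ)) (Set.mem_univ (1:ℝ))
    zero_lt_one hd.hasDerivWithinAt
  rw [slope_def_field] at hs
  have h0 : h 0 = f x := by simp [hh]
  have h1 : h 1 = f z := by simp [hh]
  rw [h0, h1] at hs
  simp only [div_one, sub_zero] at hs
  linarith [hs]

lemma lower_bound {f : E → ℝ} {g : E → E} (hf : ConvexOn ℝ Set.univ f)
    (hg : ∀ x, HasGradientAt f (g x) x)
    {L : ℝ} (hL : 0 < L) (hLip : ∀ x y, ‖g x - g y‖ ≤ L * ‖x - y‖) (x y : E) :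
    f x + ⟪g x, y - x⟫ + 1 / (2 * L) * ‖g y - g x‖ ^ 2 ≤ f y := by
  set φ : E → ℝ := fun z => f z - ⟪g x, z⟫ with hφ
  set G : E → E := fun z => g z - g x with hG
  have hGrad : ∀ z, HasGradientAt φ (G z) z := by
    intro z
    have h1 : HasFDerivAt f (InnerProductSpace.toDual ℝ E (g z)) z := hg z
    have h2 : HasFDerivAt (fun w => ⟪g x, w⟫) (InnerProductSpace.toDual ℝ E (g x)) z :=
      (InnerProductSpace.toDual ℝ E (g x)).hasFDerivAt
    have := h1.sub h2
    have heq : InnerProductSpace.toDual ℝ E (g z) - InnerProductSpace.toDual ℝ E (g x)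
        = InnerProductSpace.toDual ℝ E (G z) := by
      simp [hG, map_sub]
    rw [heq] at this
    exact this
  have hGLip : ∀ a b, ‖G a - G b‖ ≤ L * ‖a - b‖ := by
    intro a b
    have : G a - G b = g a - g b := by simp [hG]
    rw [this]; exact hLip a b
  -- x minimizes φ
  have hmin : ∀ z, φ x ≤ φ z := by
    intro z
    have := subgrad hf hg x z
    simp only [hφ]
    rw [inner_sub_right] at this
    linarith
  -- descent step for φ at y
  set z := y - (1 / L) • (g y - g x) with hz
  have hdes := descent hGrad hL hGLip y z
  have hzy : z - y = -((1 / L) • (g y - g x)) := by simp [hz]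
  have hi : ⟪G y, z - y⟫ = -(1 / L) * ‖g y - g x‖ ^ 2 := by
    rw [hzy, inner_neg_right, real_inner_smul_right]
    rw [show (G y : E) = g y - g x from rfl, real_inner_self_eq_norm_sq]
    ring
  have hn : ‖z - y‖ ^ 2 = (1 / L) ^ 2 * ‖g y - g x‖ ^ 2 := by
    rw [hzy, norm_neg, norm_smul]
    rw [Real.norm_eq_abs, abs_of_pos (by positivity : (0:ℝ) < 1 / L)]
    ring
  rw [hi, hn] at hdes
  have hfin : φ x ≤ φ y - 1 / (2 * L) * ‖g y - g x‖ ^ 2 := by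
    have := hmin z
    have hL' : L ≠ 0 := hL.ne'
    calc φ x ≤ φ z := hmin z
      _ ≤ φ y + -(1 / L) * ‖g y - g x‖ ^ 2 + L / 2 * ((1 / L) ^ 2 * ‖g y - g x‖ ^ 2) := hdes
      _ = φ y - 1 / (2 * L) * ‖g y - g x‖ ^ 2 := by field_simp; ring
  simp only [hφ] at hfin
  have : ⟪g x, y⟫ - ⟪g x, x⟫ = ⟪g x, y - x⟫ := (inner_sub_right _ _ _).symm
  linarith

theorem stmt_13 (n : ℕ) (f : EuclideanSpace ℝ (Fin n) → ℝ)
    (g : EuclideanSpace ℝ (Fin n) → EuclideanSpace ℝ (Fin n))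
    (hf : ConvexOn ℝ Set.univ f) (hg : ∀ x, HasGradientAt f (g x) x)
    (L : ℝ) (hL : 0 < L) (hLip : ∀ x y, ‖g x - g y‖ ≤ L * ‖x - y‖) :
    ∀ x y, ⟪g x - g y, x - y⟫ ≥ (1 / L) * ‖g x - g y‖ ^ 2 := by
  intro x y
  have h1 := lower_bound hf hg hL hLip x y
  have h2 := lower_bound hf hg hL hLip y x
  have e1 : ‖g y - g x‖ = ‖g x - g y‖ := norm_sub_rev _ _
  rw [e1] at h1
  have e2 : ⟪g x, y - x⟫ + ⟪g y, x - y⟫ = -⟪g x - g y, x - y⟫ := by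
    rw [inner_sub_left]
    have : (y - x : EuclideanSpace ℝ (Fin n)) = -(x - y) := by abel
    rw [this, inner_neg_right]
    ring
  have hsum : -⟪g x - g y, x - y⟫ + 2 * (1 / (2 * L)) * ‖g x - g y‖ ^ 2 ≤ 0 := by
    linarith [h1, h2, e2.le, e2.ge]
  have : 2 * (1 / (2 * L)) = 1 / L := by field_simp
  rw [this] at hsum
  linarith
end

section
/- Let T : ℝ^n → ℝ^n be ν-pseudocontractive with a fixed point x⋆ (Tx⋆ = x⋆), and let x^{k+1} = T x^k. Then for every N, ‖x^N − T x^N‖² ≤ ‖x^0 − x⋆‖² / ((N+1)ν). -/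
theorem stmt_17 (n : ℕ) (T : EuclideanSpace ℝ (Fin n) → EuclideanSpace ℝ (Fin n))
    (ν : ℝ) (hν : 0 < ν)
    (hT : ∀ x y, ‖T x - T y‖ ^ 2 ≤
      ‖x - y‖ ^ 2 - ν * ‖(x - T x) - (y - T y)‖ ^ 2)
    (xs : EuclideanSpace ℝ (Fin n)) (hxs : T xs = xs)
    (x : ℕ → EuclideanSpace ℝ (Fin n)) (hx : ∀ k, x (k + 1) = T (x k)) :
    ∀ N : ℕ, ‖x N - T (x N)‖ ^ 2 ≤ ‖x 0 - xs‖ ^ 2 / (((N : ℝ) + 1) * ν) := by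
  intro N
  set r : ℕ → ℝ := fun k => ‖x k - T (x k)‖ ^ 2 with hr
  -- key inequality: ‖x(k+1)-xs‖² ≤ ‖x k - xs‖² - ν * r k
  have key : ∀ k, ‖x (k + 1) - xs‖ ^ 2 ≤ ‖x k - xs‖ ^ 2 - ν * r k := by
    intro k
    have h := hT (x k) xs
    rw [hxs] at h
    simpa [hx k, hr] using h
  -- residual monotone: r (k+1) ≤ r k
  have mono : ∀ k, r (k + 1) ≤ r k := by
    intro k
    have h := hT (x (k + 1)) (x k)
    have h1 : ν * ‖x (k + 1) - T (x (k + 1)) - (x k - T (x k))‖ ^ 2 ≥ 0 :=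
      mul_nonneg hν.le (by positivity)
    have h2 : ‖T (x (k + 1)) - T (x k)‖ ^ 2 ≤ ‖x (k + 1) - x k‖ ^ 2 := by linarith
    have e1 : r (k + 1) = ‖T (x (k + 1)) - T (x k)‖ ^ 2 := by
      show ‖x (k+1) - T (x (k+1))‖ ^ 2 = _
      rw [norm_sub_rev, hx k]
    have e2 : r k = ‖x (k + 1) - x k‖ ^ 2 := by
      rw [hr]; simp only []
      rw [hx k, ← norm_neg]
      congr 1
      abel
    rw [e1, e2]; exact h2
  have monoLe : ∀ j k, j ≤ k → r k ≤ r j := by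
    intro j k hjk
    induction k with
    | zero => simp_all
    | succ m ih =>
      rcases Nat.lt_or_ge j (m + 1) with h | h
      · exact le_trans (mono m) (ih (Nat.lt_succ_iff.mp h))
      · have : j = m + 1 := le_antisymm hjk h
        simp [this]
  -- summed bound
  have sum_bound : ∀ M, ν * ∑ k ∈ Finset.range (M + 1), r k ≤ ‖x 0 - xs‖ ^ 2 := by
    intro M
    have : ∀ M, ν * ∑ k ∈ Finset.range (M + 1), r k
        ≤ ‖x 0 - xs‖ ^ 2 - ‖x (M + 1) - xs‖ ^ 2 := by
      intro M
      induction M with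
      | zero => have := key 0; rw [Finset.sum_range_one]; linarith
      | succ m ih =>
        rw [Finset.sum_range_succ, mul_add]
        have := key (m + 1)
        linarith
    have h := this M
    have : (0 : ℝ) ≤ ‖x (M + 1) - xs‖ ^ 2 := by positivity
    linarith
  -- (N+1) * r N ≤ ∑
  have count : ((N : ℝ) + 1) * r N ≤ ∑ k ∈ Finset.range (N + 1), r k := by
    have : ∑ k ∈ Finset.range (N + 1), r N ≤ ∑ k ∈ Finset.range (N + 1), r k := by
      apply Finset.sum_le_sum
      intro i hi
      exact monoLe i N (Nat.lt_succ_iff.mp (Finset.mem_range.mp hi))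
    simpa [Finset.sum_const, mul_comm] using this
  have hpos : 0 < ((N : ℝ) + 1) * ν := by positivity
  rw [le_div_iff₀ hpos]
  have := sum_bound N
  calc r N * (((N : ℝ) + 1) * ν) = ν * (((N : ℝ) + 1) * r N) := by ring
    _ ≤ ν * ∑ k ∈ Finset.range (N + 1), r k :=
        mul_le_mul_of_nonneg_left count hν.le
    _ ≤ ‖x 0 - xs‖ ^ 2 := this
end

section
/- Let T : ℝ^n → ℝ^n be ν-pseudocontractive with nonempty fixed point set, and let x^{k+1} = T x^k with x^k → x⋆ ∈ Fix T. Then limsup_{k→∞} (k+1)·ν·‖x^k − T x^k‖² ≤ 0; i.e., ‖x^N − T x^N‖² = o(1/N). -/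
open Filter

theorem stmt_19 (n : ℕ) (T : EuclideanSpace ℝ (Fin n) → EuclideanSpace ℝ (Fin n))
    (ν : ℝ) (hν : 0 < ν)
    (hT : ∀ x y, ‖T x - T y‖ ^ 2 ≤
      ‖x - y‖ ^ 2 - ν * ‖(x - T x) - (y - T y)‖ ^ 2)
    (x : ℕ → EuclideanSpace ℝ (Fin n)) (hx : ∀ k, x (k + 1) = T (x k))
    (xs : EuclideanSpace ℝ (Fin n)) (hxs : T xs = xs)
    (hconv : Tendsto x atTop (nhds xs)) :
    limsup (fun k : ℕ => ((k : ℝ) + 1) * ν * ‖x k - T (x k)‖ ^ 2) atTop ≤ 0 := by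
  set r : ℕ → ℝ := fun k => ν * ‖x k - T (x k)‖ ^ 2 with hrdef
  have hr0 : ∀ k, 0 ≤ r k := fun k =>
    mul_nonneg hν.le (by positivity)
  -- r is antitone (one step)
  have hstep : ∀ k, r (k + 1) ≤ r k := by
    intro k
    have h := hT (x k) (x (k + 1))
    rw [← hx k, ← hx (k + 1)] at h
    have hnn : 0 ≤ ν * ‖(x k - x (k + 1)) - (x (k + 1) - x (k + 2))‖ ^ 2 :=
      mul_nonneg hν.le (by positivity)
    have h2 : ‖x (k + 1) - x (k + 2)‖ ^ 2 ≤ ‖x k - x (k + 1)‖ ^ 2 := by linarith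
    have e1 : ‖x (k + 1) - T (x (k + 1))‖ = ‖x (k + 1) - x (k + 2)‖ := by rw [← hx (k + 1)]
    have e2 : ‖x k - T (x k)‖ = ‖x k - x (k + 1)‖ := by rw [← hx k]
    simp only [hrdef, e1, e2]
    exact mul_le_mul_of_nonneg_left h2 hν.le
  have hanti : Antitone r := antitone_nat_of_succ_le hstep
  -- key inequality vs the fixed point
  have hkey : ∀ k, r k ≤ ‖x k - xs‖ ^ 2 - ‖x (k + 1) - xs‖ ^ 2 := by
    intro k
    have h := hT (x k) xs
    rw [hxs, sub_self, sub_zero] at h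
    rw [← hx k] at h
    simp only [hrdef]
    rw [← hx k]
    linarith
  -- summability
  have hsum : Summable r := by
    apply summable_of_sum_range_le hr0
    intro m
    calc ∑ k ∈ Finset.range m, r k
        ≤ ∑ k ∈ Finset.range m, (‖x k - xs‖ ^ 2 - ‖x (k + 1) - xs‖ ^ 2) :=
          Finset.sum_le_sum fun k _ => hkey k
      _ = ‖x 0 - xs‖ ^ 2 - ‖x m - xs‖ ^ 2 := by
          rw [Finset.sum_range_sub' (fun k => ‖x k - xs‖ ^ 2)]
      _ ≤ ‖x 0 - xs‖ ^ 2 := sub_le_self _ (by positivity)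
  -- r → 0 and tail sums → 0
  have hr_tendsto : Tendsto r atTop (nhds 0) := hsum.tendsto_atTop_zero
  have htail : Tendsto (fun N => ∑' k, r (k + N)) atTop (nhds 0) :=
    tendsto_sum_nat_add r
  -- main: (k+1) * r k → 0
  have hmain : Tendsto (fun k : ℕ => ((k : ℝ) + 1) * r k) atTop (nhds 0) := by
    rw [Metric.tendsto_atTop]
    intro ε hε
    obtain ⟨N1, hN1⟩ := (Metric.tendsto_atTop.1 htail (ε / 2) (by linarith)) 
    obtain ⟨N2, hN2⟩ := (Metric.tendsto_atTop.1 hr_tendsto (ε / (2 * (N1 + 1))) (by positivity))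
    refine ⟨max N1 N2, fun m hm => ?_⟩
    have hmN1 : N1 ≤ m := le_trans (le_max_left _ _) hm
    have hmN2 : N2 ≤ m := le_trans (le_max_right _ _) hm
    have hb : 0 ≤ ((m : ℝ) + 1) * r m := mul_nonneg (by positivity) (hr0 m)
    rw [Real.dist_eq, sub_zero, abs_of_nonneg hb]
    -- tail sum bound
    have htail1 : ∑' k, r (k + N1) < ε / 2 := by
      have := hN1 N1 le_rfl
      rw [Real.dist_eq, sub_zero] at this
      exact lt_of_abs_lt this
    have hsum1 : Summable (fun k => r (k + N1)) := (summable_nat_add_iff N1).2 hsum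
    have hpart : ∑ k ∈ Finset.range (m + 1 - N1), r (k + N1) ≤ ∑' k, r (k + N1) :=
      Summable.sum_le_tsum _ (fun i _ => hr0 _) hsum1
    have hcard : ((m + 1 - N1 : ℕ) : ℝ) * r m ≤ ∑ k ∈ Finset.range (m + 1 - N1), r (k + N1) := by
      have : ∀ k ∈ Finset.range (m + 1 - N1), r m ≤ r (k + N1) := by
        intro k hk
        apply hanti
        have := Finset.mem_range.1 hk
        omega
      calc ((m + 1 - N1 : ℕ) : ℝ) * r m 
          = ∑ _k ∈ Finset.range (m + 1 - N1), r m := by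
            rw [Finset.sum_const, nsmul_eq_mul, Finset.card_range]
        _ ≤ ∑ k ∈ Finset.range (m + 1 - N1), r (k + N1) := Finset.sum_le_sum this
    have h1 : ((m + 1 - N1 : ℕ) : ℝ) * r m < ε / 2 := lt_of_le_of_lt (le_trans hcard hpart) htail1
    have h2 : (N1 : ℝ) * r m < ε / 2 := by
      have hrm : r m < ε / (2 * (N1 + 1)) := by
        have := hN2 m hmN2
        rw [Real.dist_eq, sub_zero] at this
        exact lt_of_abs_lt this
      calc (N1 : ℝ) * r m ≤ ((N1 : ℝ) + 1) * r m :=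
            mul_le_mul_of_nonneg_right (by linarith) (hr0 m)
        _ < ((N1 : ℝ) + 1) * (ε / (2 * (N1 + 1))) := by
            apply mul_lt_mul_of_pos_left hrm (by positivity)
        _ = ε / 2 := by field_simp
    have hsplit : ((m : ℝ) + 1) = ((m + 1 - N1 : ℕ) : ℝ) + (N1 : ℝ) := by
      push_cast [Nat.cast_sub (by omega : N1 ≤ m + 1)]
      ring
    calc ((m : ℝ) + 1) * r m 
        = ((m + 1 - N1 : ℕ) : ℝ) * r m + (N1 : ℝ) * r m := by rw [hsplit]; ring
      _ < ε / 2 + ε / 2 := by linarith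
      _ = ε := by ring
  have heq : (fun k : ℕ => ((k : ℝ) + 1) * ν * ‖x k - T (x k)‖ ^ 2)
      = fun k : ℕ => ((k : ℝ) + 1) * r k := by
    funext k; simp only [hrdef]; ring
  rw [heq, hmain.limsup_eq]
end
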